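/- arXiv:0909.5075 — 3 statements merged into one kernel-verified Lean document; each statement's English description precedes it below -/
import Mathlib

section
/- Measurement entropy is subadditive: let 𝔄 and 𝔅 be test spaces and let ℭ be a test space on the outcome space X_𝔄 × X_𝔅 whose tests include all product tests E×F = {(e,f) : e∈E, f∈F} for E ∈ 𝔄, F ∈ 𝔅. Then for every non-signaling state ω on ℭ, H(ω) ≤ H(ω^A) + H(ω^B), where H(ω) is computed over the tests of ℭ and H(ω^A), H(ω^B) over 𝔄 and 𝔅 respectively. -/
/-!
On a product test `E ×ˢ F` the joint entropy is bounded by the sum of the entropies of the two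
marginals: this is Gibbs' inequality `w log (c / w) ≤ c - w`, applied termwise with `c` the product
of the marginals and summed. Since `ℭ` contains every product test, the infimum over `ℭ` is at most
`H_E(ω^A) + H_F(ω^B)` for all `E ∈ 𝔄`, `F ∈ 𝔅`; taking infima over `E` and `F` gives the theorem.
-/

/-- Local measurement entropy of a state `α` at a test `E` (base-2 logarithm). -/
noncomputable def locEnt {X : Type*} (E : Finset X) (α : X → ℝ) : ℝ :=
  ∑ x ∈ E, -(α x * Real.logb 2 (α x))

/-- Measurement entropy: infimum of local entropies over all tests of the test space. -/
noncomputable def measEnt {X : Type*} (𝔄 : Set (Finset X)) (α : X → ℝ) : ℝ :=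
  sInf ((fun E => locEnt E α) '' 𝔄)

/-- A state on a test space: nonnegative on outcomes, summing to 1 on every test. -/
def IsState {X : Type*} (𝔄 : Set (Finset X)) (α : X → ℝ) : Prop :=
  (∀ E ∈ 𝔄, ∀ x ∈ E, 0 ≤ α x) ∧ (∀ E ∈ 𝔄, ∑ x ∈ E, α x = 1)

/-- A state on a product outcome space is non-signaling if each one-sided
marginal sum is independent of the test chosen on the other side. -/
def NonSignaling {X Y : Type*} (𝔄 : Set (Finset X)) (𝔅 : Set (Finset Y))
    (ω : X × Y → ℝ) : Prop :=
  (∀ e : X, ∀ F ∈ 𝔅, ∀ F' ∈ 𝔅, ∑ f ∈ F, ω (e, f) = ∑ f ∈ F', ω (e, f)) ∧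
  (∀ f : Y, ∀ E ∈ 𝔄, ∀ E' ∈ 𝔄, ∑ e ∈ E, ω (e, f) = ∑ e ∈ E', ω (e, f))

open Real Finset

namespace Real

lemma negMulLog_le_neg_mul_log_add_sub {w c : ℝ} (hw : 0 ≤ w) (hc : 0 < c) :
    negMulLog w ≤ -(w * log c) + c - w :=
  calc negMulLog w = w / c * negMulLog c + c * negMulLog (w / c) := by
        rw [← negMulLog_mul, mul_div_cancel₀ _ hc.ne']
    _ ≤ w / c * negMulLog c + c * (1 - w / c) := by
        gcongr; exact negMulLog_le_one_sub_self (div_nonneg hw hc.le)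
    _ = -(w * log c) + c - w := by
        rw [negMulLog]; field_simp; ring

lemma negMulLog_le_of_le_of_le {w a b : ℝ} (hw : 0 ≤ w) (hwa : w ≤ a) (hwb : w ≤ b) :
    negMulLog w ≤ -(w * log a) - w * log b + a * b - w := by
  rcases hw.eq_or_lt with rfl | hw_pos
  · simpa using mul_nonneg hwa hwb
  · have ha : 0 < a := hw_pos.trans_le hwa
    have hb : 0 < b := hw_pos.trans_le hwb
    have := negMulLog_le_neg_mul_log_add_sub hw (mul_pos ha hb)
    rw [log_mul ha.ne' hb.ne'] at this
    linarith

end Real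

section Entropy

variable {X Y : Type*}

lemma sum_negMulLog_prod_le (E : Finset X) (F : Finset Y) (ω : X × Y → ℝ)
    (hnn : ∀ p ∈ E ×ˢ F, 0 ≤ ω p) (hsum : ∑ p ∈ E ×ˢ F, ω p = 1) :
    ∑ p ∈ E ×ˢ F, negMulLog (ω p) ≤
      ∑ e ∈ E, negMulLog (∑ f ∈ F, ω (e, f)) + ∑ f ∈ F, negMulLog (∑ e ∈ E, ω (e, f)) := by
  set a := fun e => ∑ f ∈ F, ω (e, f)
  set b := fun f => ∑ e ∈ E, ω (e, f)
  have hnn' : ∀ e ∈ E, ∀ f ∈ F, 0 ≤ ω (e, f) := fun e he f hf => hnn _ (mem_product.2 ⟨he, hf⟩)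
  have hle_a : ∀ p ∈ E ×ˢ F, ω p ≤ a p.1 := fun p hp =>
    single_le_sum (hnn' _ (mem_product.1 hp).1) (mem_product.1 hp).2
  have hle_b : ∀ p ∈ E ×ˢ F, ω p ≤ b p.2 := fun p hp =>
    single_le_sum (fun e he => hnn' e he _ (mem_product.1 hp).2) (mem_product.1 hp).1
  have hlog_a : ∑ p ∈ E ×ˢ F, ω p * log (a p.1) = ∑ e ∈ E, a e * log (a e) := by
    rw [sum_product]; simp only [a, sum_mul]
  have hlog_b : ∑ p ∈ E ×ˢ F, ω p * log (b p.2) = ∑ f ∈ F, b f * log (b f) := by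
    rw [sum_product_right]; simp only [b, sum_mul]
  have hprod : ∑ p ∈ E ×ˢ F, a p.1 * b p.2 = (∑ e ∈ E, a e) * ∑ f ∈ F, b f := by
    rw [sum_product, sum_mul_sum]
  have ha : ∑ e ∈ E, a e = 1 := by rw [← hsum, sum_product]
  have hb : ∑ f ∈ F, b f = 1 := by rw [← hsum, sum_product_right]
  calc ∑ p ∈ E ×ˢ F, negMulLog (ω p)
      ≤ ∑ p ∈ E ×ˢ F, (-(ω p * log (a p.1)) - ω p * log (b p.2) + a p.1 * b p.2 - ω p) :=
        sum_le_sum fun p hp => negMulLog_le_of_le_of_le (hnn p hp) (hle_a p hp) (hle_b p hp)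
    _ = ∑ e ∈ E, negMulLog (a e) + ∑ f ∈ F, negMulLog (b f) +
          ((∑ e ∈ E, a e) * ∑ f ∈ F, b f - ∑ p ∈ E ×ˢ F, ω p) := by
        simp only [sum_sub_distrib, sum_add_distrib, sum_neg_distrib, hlog_a, hlog_b, hprod,
          negMulLog_eq_neg]
        ring
    _ = ∑ e ∈ E, negMulLog (a e) + ∑ f ∈ F, negMulLog (b f) := by
        rw [ha, hb, hsum]; ring

lemma locEnt_eq_sum_negMulLog_div (E : Finset X) (α : X → ℝ) :
    locEnt E α = (∑ x ∈ E, negMulLog (α x)) / log 2 := by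
  rw [locEnt, sum_div]
  refine sum_congr rfl fun x _ => ?_
  rw [negMulLog_eq_neg, logb]
  ring

lemma locEnt_prod_le_add (E : Finset X) (F : Finset Y) (ω : X × Y → ℝ)
    (hnn : ∀ p ∈ E ×ˢ F, 0 ≤ ω p) (hsum : ∑ p ∈ E ×ˢ F, ω p = 1) :
    locEnt (E ×ˢ F) ω ≤
      locEnt E (fun e => ∑ f ∈ F, ω (e, f)) + locEnt F (fun f => ∑ e ∈ E, ω (e, f)) := by
  simp only [locEnt_eq_sum_negMulLog_div, ← add_div]
  exact div_le_div_of_nonneg_right (sum_negMulLog_prod_le E F ω hnn hsum)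
    (log_nonneg one_le_two)

lemma IsState.locEnt_nonneg {𝔄 : Set (Finset X)} {α : X → ℝ} (hα : IsState 𝔄 α)
    {E : Finset X} (hE : E ∈ 𝔄) : 0 ≤ locEnt E α := by
  rw [locEnt_eq_sum_negMulLog_div]
  refine div_nonneg (sum_nonneg fun x hx => negMulLog_nonneg (hα.1 E hE x hx) ?_)
    (log_nonneg one_le_two)
  rw [← hα.2 E hE]
  exact single_le_sum (hα.1 E hE) hx

lemma IsState.measEnt_le_locEnt {𝔄 : Set (Finset X)} {α : X → ℝ} (hα : IsState 𝔄 α)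
    {E : Finset X} (hE : E ∈ 𝔄) : measEnt 𝔄 α ≤ locEnt E α :=
  csInf_le ⟨0, by rintro _ ⟨G, hG, rfl⟩; exact hα.locEnt_nonneg hG⟩ ⟨E, hE, rfl⟩

lemma measEnt_eq_iInf (𝔄 : Set (Finset X)) (α : X → ℝ) :
    measEnt 𝔄 α = ⨅ E : 𝔄, locEnt E α :=
  sInf_image'

end Entropy

theorem measEnt_subadditive_general {X Y : Type*} (𝔄 : Set (Finset X)) (𝔅 : Set (Finset Y))
    (ℭ : Set (Finset (X × Y)))
    (h𝔄 : 𝔄.Nonempty) (h𝔅 : 𝔅.Nonempty)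
    (hprod : ∀ E ∈ 𝔄, ∀ F ∈ 𝔅, E ×ˢ F ∈ ℭ)
    (ω : X × Y → ℝ) (hω : IsState ℭ ω)
    (ωA : X → ℝ) (hωA : ∀ F ∈ 𝔅, ∀ e, ωA e = ∑ f ∈ F, ω (e, f))
    (ωB : Y → ℝ) (hωB : ∀ E ∈ 𝔄, ∀ f, ωB f = ∑ e ∈ E, ω (e, f)) :
    measEnt ℭ ω ≤ measEnt 𝔄 ωA + measEnt 𝔅 ωB := by
  have := h𝔄.to_subtype
  have := h𝔅.to_subtype
  rw [measEnt_eq_iInf 𝔄, measEnt_eq_iInf 𝔅]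
  refine le_ciInf_add_ciInf fun E F => ?_
  have hEF := hprod E E.2 F F.2
  calc measEnt ℭ ω ≤ locEnt (E.1 ×ˢ F.1) ω := hω.measEnt_le_locEnt hEF
    _ ≤ locEnt E ωA + locEnt F ωB := by
      rw [funext (hωA F F.2), funext (hωB E E.2)]
      exact locEnt_prod_le_add E F ω (hω.1 _ hEF) (hω.2 _ hEF)

/-- Measurement entropy is subadditive: for a composite test space ℭ
containing all product tests, every non-signaling state ω satisfies
H(ω) ≤ H(ω^A) + H(ω^B). -/
theorem measEnt_subadditive {X Y : Type*} (𝔄 : Set (Finset X)) (𝔅 : Set (Finset Y))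
    (ℭ : Set (Finset (X × Y)))
    (h𝔄 : 𝔄.Nonempty) (h𝔅 : 𝔅.Nonempty)
    (h𝔄ne : ∀ E ∈ 𝔄, E.Nonempty) (h𝔅ne : ∀ F ∈ 𝔅, F.Nonempty)
    (hprod : ∀ E ∈ 𝔄, ∀ F ∈ 𝔅, E ×ˢ F ∈ ℭ)
    (ω : X × Y → ℝ) (hω : IsState ℭ ω) (hns : NonSignaling 𝔄 𝔅 ω)
    (ωA : X → ℝ) (hωA : ∀ F ∈ 𝔅, ∀ e, ωA e = ∑ f ∈ F, ω (e, f))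
    (ωB : Y → ℝ) (hωB : ∀ E ∈ 𝔄, ∀ f, ωB f = ∑ e ∈ E, ω (e, f)) :
    measEnt ℭ ω ≤ measEnt 𝔄 ωA + measEnt 𝔅 ωB :=
  measEnt_subadditive_general 𝔄 𝔅 ℭ h𝔄 h𝔅 hprod ω hω ωA hωA ωB hωB
end

section
/- Joint measurement entropy with a classical system: let A be the classical system with single test E (states are all probability distributions on E), let 𝔅 be a test space, and let ω be a state on the Foulis–Randall product of {E} with 𝔅, with marginal ω^A(e) = Σ_{f∈F} ω(e,f) (independent of F ∈ 𝔅) and conditional states ω^{B|e}(f) = ω(e,f)/ω^A(e) for ω^A(e) > 0. Then H(ω) = H(ω^A) + Σ_{e∈E, ω^A(e)>0} ω^A(e) · H(ω^{B|e}), where H(ω^A) = −Σ_{e∈E} ω^A(e) log₂ ω^A(e). -/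
/-- The Foulis–Randall product of the classical test space `{E}` with a test space
`𝔅`: its tests are the two-stage tests `{(e,f) : e ∈ E, f ∈ F e}`, one for each
choice of a test `F e ∈ 𝔅` for every `e`. -/
def frProd {Xa Y : Type*} [DecidableEq Xa] [DecidableEq Y]
    (E : Finset Xa) (𝔅 : Set (Finset Y)) : Set (Finset (Xa × Y)) :=
  {T | ∃ F : Xa → Finset Y, (∀ e ∈ E, F e ∈ 𝔅) ∧
    T = E.biUnion fun e => (F e).image fun f => (e, f)}

open Finset Real

lemma neg_mul_logb_mul (a b : ℝ) :
    -(a * b * logb 2 (a * b)) = b * -(a * logb 2 a) + a * -(b * logb 2 b) := by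
  have h (x : ℝ) : -(x * logb 2 x) = negMulLog x / log 2 := by
    simp only [negMulLog, logb]; ring
  rw [h, h, h, negMulLog_mul]
  ring

lemma locEnt_const_mul {X : Type*} {F : Finset X} {q : X → ℝ} (hq : ∑ x ∈ F, q x = 1)
    (a : ℝ) : locEnt F (fun x => a * q x) = -(a * logb 2 a) + a * locEnt F q := by
  simp only [locEnt, neg_mul_logb_mul, sum_add_distrib, ← sum_mul, ← mul_sum, hq, one_mul]

namespace IsState

variable {X : Type*} {𝔄 : Set (Finset X)} {α : X → ℝ}

lemma le_one (hα : IsState 𝔄 α) {E : Finset X} (hE : E ∈ 𝔄) {x : X} (hx : x ∈ E) :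
    α x ≤ 1 :=
  hα.2 E hE ▸ single_le_sum (hα.1 E hE) hx

lemma locEnt_nonneg_s6 (hα : IsState 𝔄 α) {E : Finset X} (hE : E ∈ 𝔄) : 0 ≤ locEnt E α := by
  refine sum_nonneg fun x hx => ?_
  have := logb_nonpos one_lt_two (hα.1 E hE x hx) (hα.le_one hE hx)
  nlinarith [hα.1 E hE x hx]

lemma bddBelow_locEnt (hα : IsState 𝔄 α) : BddBelow ((fun E => locEnt E α) '' 𝔄) :=
  ⟨0, by rintro _ ⟨E, hE, rfl⟩; exact hα.locEnt_nonneg_s6 hE⟩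

end IsState

lemma csInf_image_add_sum_mul {ι β : Type*} (E : Finset ι) {B : Set β} (hB : B.Nonempty)
    {c : ι → ℝ} (hc : ∀ i ∈ E, 0 ≤ c i) {g : ι → β → ℝ}
    (hg : ∀ i ∈ E, 0 < c i → BddBelow (g i '' B)) (a : ℝ) :
    sInf ((fun F : ι → β => a + ∑ i ∈ E, c i * g i (F i)) '' {F | ∀ i ∈ E, F i ∈ B}) =
      a + ∑ i ∈ E, c i * sInf (g i '' B) := by
  set t := a + ∑ i ∈ E, c i * sInf (g i '' B)
  have hle_term : ∀ F : ι → β, (∀ i ∈ E, F i ∈ B) → ∀ i ∈ E,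
      c i * sInf (g i '' B) ≤ c i * g i (F i) := by
    intro F hF i hi
    rcases (hc i hi).eq_or_lt with hci | hci
    · simp [← hci]
    · exact mul_le_mul_of_nonneg_left (csInf_le (hg i hi hci) ⟨F i, hF i hi, rfl⟩) hci.le
  have hlb : ∀ s ∈ (fun F : ι → β => a + ∑ i ∈ E, c i * g i (F i)) '' {F | ∀ i ∈ E, F i ∈ B},
      t ≤ s := by
    rintro _ ⟨F, hF, rfl⟩
    exact add_le_add_right (sum_le_sum (hle_term F hF)) a
  obtain ⟨b₀, hb₀⟩ := id hB
  refine le_antisymm (le_of_forall_pos_le_add fun ε hε => ?_)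
    (le_csInf ⟨_, fun _ => b₀, fun _ _ => hb₀, rfl⟩ hlb)
  set δ := ε / (∑ i ∈ E, c i + 1)
  have hsum_c : 0 ≤ ∑ i ∈ E, c i := sum_nonneg hc
  have hδ : 0 < δ := by positivity
  have hnear : ∀ i ∈ E, ∃ b ∈ B, c i * g i b ≤ c i * (sInf (g i '' B) + δ) := by
    intro i hi
    rcases (hc i hi).eq_or_lt with hci | hci
    · exact ⟨b₀, hb₀, by simp [← hci]⟩
    · obtain ⟨_, ⟨b, hb, rfl⟩, hlt⟩ :=
        exists_lt_of_csInf_lt (hB.image (g i)) (lt_add_of_pos_right _ hδ)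
      exact ⟨b, hb, mul_le_mul_of_nonneg_left hlt.le hci.le⟩
  have : Nonempty β := ⟨b₀⟩
  choose! F hFB hF using hnear
  have hδε : δ * ∑ i ∈ E, c i ≤ ε := by
    rw [div_mul_eq_mul_div, div_le_iff₀ (by positivity)]
    nlinarith
  calc _ ≤ a + ∑ i ∈ E, c i * g i (F i) := csInf_le ⟨t, hlb⟩ ⟨F, hFB, rfl⟩
    _ ≤ a + ∑ i ∈ E, c i * (sInf (g i '' B) + δ) := add_le_add_right (sum_le_sum hF) a
    _ ≤ t + ε := by
      simp only [t, mul_add, sum_add_distrib, mul_comm _ δ, ← mul_sum] at hδε ⊢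
      linarith

section FoulisRandall

variable {Xa Y : Type*} [DecidableEq Xa] [DecidableEq Y]

def twoStageTest (E : Finset Xa) (F : Xa → Finset Y) : Finset (Xa × Y) :=
  E.biUnion fun e => (F e).image fun f => (e, f)

lemma frProd_eq_image (E : Finset Xa) (𝔅 : Set (Finset Y)) :
    frProd E 𝔅 = twoStageTest E '' {F | ∀ e ∈ E, F e ∈ 𝔅} := by
  ext T
  simp only [frProd, twoStageTest, Set.mem_image, eq_comm]
  rfl

lemma twoStageTest_mem_frProd {E : Finset Xa} {𝔅 : Set (Finset Y)} {F : Xa → Finset Y}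
    (hF : ∀ e ∈ E, F e ∈ 𝔅) : twoStageTest E F ∈ frProd E 𝔅 :=
  ⟨F, hF, rfl⟩

lemma mk_mem_twoStageTest {E : Finset Xa} {F : Xa → Finset Y} {e : Xa} {f : Y} (he : e ∈ E)
    (hf : f ∈ F e) : (e, f) ∈ twoStageTest E F :=
  mem_biUnion.2 ⟨e, he, mem_image_of_mem _ hf⟩

lemma sum_twoStageTest {M : Type*} [AddCommMonoid M] (E : Finset Xa) (F : Xa → Finset Y)
    (g : Xa × Y → M) : ∑ p ∈ twoStageTest E F, g p = ∑ e ∈ E, ∑ f ∈ F e, g (e, f) := by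
  rw [twoStageTest, sum_biUnion]
  · exact sum_congr rfl fun e _ => sum_image fun _ _ _ _ h => (Prod.mk.inj h).2
  · intro a _ b _ hab
    simp only [Function.onFun, disjoint_left, mem_image]
    rintro _ ⟨_, _, rfl⟩ ⟨_, _, h⟩
    exact hab (Prod.mk.inj h).1.symm

variable {E : Finset Xa} {𝔅 : Set (Finset Y)} {ω : Xa × Y → ℝ} {ωA : Xa → ℝ}
  {ωB : Xa → Y → ℝ}

lemma IsState.nonneg_of_mem_frProd (hω : IsState (frProd E 𝔅) ω) {e : Xa} (he : e ∈ E)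
    {F : Finset Y} (hF : F ∈ 𝔅) {f : Y} (hf : f ∈ F) : 0 ≤ ω (e, f) :=
  hω.1 _ (twoStageTest_mem_frProd fun _ _ => hF) _
    (mk_mem_twoStageTest (F := fun _ => F) he hf)

lemma marginal_nonneg (hω : IsState (frProd E 𝔅) ω) {F : Finset Y} (hF : F ∈ 𝔅)
    (hωA : ∀ e, ωA e = ∑ f ∈ F, ω (e, f)) {e : Xa} (he : e ∈ E) : 0 ≤ ωA e :=
  hωA e ▸ sum_nonneg fun _ hf => hω.nonneg_of_mem_frProd he hF hf

lemma isState_conditional (hω : IsState (frProd E 𝔅) ω)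
    (hωA : ∀ F ∈ 𝔅, ∀ e, ωA e = ∑ f ∈ F, ω (e, f)) {e : Xa} (he : e ∈ E) (hpos : 0 < ωA e)
    (hωB : ∀ f, ωB e f = ω (e, f) / ωA e) : IsState 𝔅 (ωB e) := by
  refine ⟨fun F hF f hf => ?_, fun F hF => ?_⟩
  · rw [hωB]
    exact div_nonneg (hω.nonneg_of_mem_frProd he hF hf) hpos.le
  · simp only [hωB, ← sum_div, ← hωA F hF, div_self hpos.ne']

lemma locEnt_twoStageTest (hω : IsState (frProd E 𝔅) ω)
    (hωA : ∀ F ∈ 𝔅, ∀ e, ωA e = ∑ f ∈ F, ω (e, f))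
    (hωB : ∀ e, 0 < ωA e → ∀ f, ωB e f = ω (e, f) / ωA e)
    {F : Xa → Finset Y} (hF : ∀ e ∈ E, F e ∈ 𝔅) :
    locEnt (twoStageTest E F) ω = locEnt E ωA + ∑ e ∈ E, ωA e * locEnt (F e) (ωB e) := by
  rw [locEnt, sum_twoStageTest, locEnt, ← sum_add_distrib]
  refine sum_congr rfl fun e he => ?_
  rcases (marginal_nonneg hω (hF e he) (hωA _ (hF e he)) he).eq_or_lt with hzero | hpos
  · have hω0 : ∀ f ∈ F e, ω (e, f) = 0 :=
      (sum_eq_zero_iff_of_nonneg fun _ hf => hω.nonneg_of_mem_frProd he (hF e he) hf).1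
        (hzero.trans (hωA _ (hF e he) e)).symm
    rw [sum_eq_zero fun f hf => by simp [hω0 f hf], ← hzero]
    simp
  · have hsum : ∑ f ∈ F e, ωB e f = 1 :=
      (isState_conditional hω hωA he hpos (hωB e hpos)).2 _ (hF e he)
    rw [← locEnt_const_mul hsum]
    refine sum_congr rfl fun f _ => ?_
    simp only [hωB e hpos, mul_div_cancel₀ _ hpos.ne']

end FoulisRandall

/-- joint measurement entropy with a classical system:
H(ω) = H(ω^A) + Σ_e ω^A(e) H(ω^{B|e}). -/
theorem classical_joint_measEnt {Xa Y : Type*} [DecidableEq Xa] [DecidableEq Y]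
    (E : Finset Xa) (𝔅 : Set (Finset Y)) (h𝔅 : 𝔅.Nonempty)
    (ω : Xa × Y → ℝ) (hω : IsState (frProd E 𝔅) ω)
    (ωA : Xa → ℝ) (hωA : ∀ F ∈ 𝔅, ∀ e, ωA e = ∑ f ∈ F, ω (e, f))
    (ωB : Xa → Y → ℝ) (hωB : ∀ e, 0 < ωA e → ∀ f, ωB e f = ω (e, f) / ωA e) :
    measEnt (frProd E 𝔅) ω =
      locEnt E ωA + ∑ e ∈ E, ωA e * measEnt 𝔅 (ωB e) := by
  obtain ⟨F₀, hF₀⟩ := h𝔅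
  have hchain : Set.EqOn (fun F => locEnt (twoStageTest E F) ω)
      (fun F => locEnt E ωA + ∑ e ∈ E, ωA e * locEnt (F e) (ωB e)) {F | ∀ e ∈ E, F e ∈ 𝔅} :=
    fun F hF => locEnt_twoStageTest hω hωA hωB hF
  rw [measEnt, frProd_eq_image, Set.image_image, Set.image_congr hchain]
  exact csInf_image_add_sum_mul E ⟨F₀, hF₀⟩
    (fun e he => marginal_nonneg hω hF₀ (hωA F₀ hF₀) he)
    (fun e he hpos => (isState_conditional hω hωA he hpos (hωB e hpos)).bddBelow_locEnt)
    (locEnt E ωA)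
end

section
/- If A is classical then H(B|A) ≥ 0: let A be the classical system with single test E, let 𝔅 be a test space, and let ω be a state on the Foulis–Randall product of {E} with 𝔅, with marginal ω^A(e) = Σ_{f∈F} ω(e,f). Then H(ω) ≥ H(ω^A), i.e., the conditional entropy H(B|A) := H(ω) − H(ω^A) is nonnegative. -/
/-!
Splitting a two-stage test `{(e, f) : e ∈ E, f ∈ F e}` into its blocks writes its entropy as a
sum over `e ∈ E` of the entropies of the blocks. Since `ω (e, f) ≤ ωA e`, and `logb 2` is
monotone, the block at `e` contributes at least `-ωA e * logb 2 (ωA e)`; summing over `e` bounds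
every local entropy of `ω`, hence their infimum, below by the Shannon entropy of `ωA`.
-/

open Finset

theorem neg_sum_mul_logb_sum_le {ι : Type*} (s : Finset ι) (p : ι → ℝ)
    (hp : ∀ i ∈ s, 0 ≤ p i) {b : ℝ} (hb : 1 < b) :
    -((∑ i ∈ s, p i) * Real.logb b (∑ i ∈ s, p i)) ≤ ∑ i ∈ s, -(p i * Real.logb b (p i)) := by
  rw [sum_mul, ← sum_neg_distrib]
  refine sum_le_sum fun i hi => neg_le_neg ?_
  rcases (hp i hi).eq_or_lt with hzero | hpos
  · simp [← hzero]
  · exact mul_le_mul_of_nonneg_left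
      (Real.logb_le_logb_of_le hb hpos (single_le_sum hp hi)) hpos.le

theorem le_measEnt {X : Type*} {𝔄 : Set (Finset X)} (h𝔄 : 𝔄.Nonempty) {α : X → ℝ} {c : ℝ}
    (h : ∀ T ∈ 𝔄, c ≤ locEnt T α) : c ≤ measEnt 𝔄 α :=
  le_csInf (h𝔄.image _) (Set.forall_mem_image.2 h)

section FoulisRandall

variable {Xa Y : Type*} [DecidableEq Xa] [DecidableEq Y]

theorem locEnt_biUnion_image (E : Finset Xa) (F : Xa → Finset Y) (ω : Xa × Y → ℝ) :
    locEnt (E.biUnion fun e => (F e).image fun f => (e, f)) ω =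
      ∑ e ∈ E, locEnt (F e) fun f => ω (e, f) := by
  have hdisj : (E : Set Xa).PairwiseDisjoint fun e => (F e).image fun f => (e, f) := by
    intro a _ b _ hab
    simp only [Function.onFun, disjoint_left, mem_image]
    rintro _ ⟨f, _, rfl⟩ ⟨g, _, hg⟩
    exact hab (Prod.ext_iff.1 hg).1.symm
  rw [locEnt, sum_biUnion hdisj]
  refine sum_congr rfl fun e _ => ?_
  rw [sum_image fun f _ g _ h => (Prod.ext_iff.1 h).2, locEnt]

theorem frProd_nonempty (E : Finset Xa) {𝔅 : Set (Finset Y)} (h𝔅 : 𝔅.Nonempty) :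
    (frProd E 𝔅).Nonempty :=
  let ⟨F, hF⟩ := h𝔅
  ⟨_, fun _ => F, fun _ _ => hF, rfl⟩

theorem locEnt_marginal_le_locEnt (E : Finset Xa) (𝔅 : Set (Finset Y)) (ω : Xa × Y → ℝ)
    (hω : ∀ T ∈ frProd E 𝔅, ∀ x ∈ T, 0 ≤ ω x)
    (ωA : Xa → ℝ) (hωA : ∀ F ∈ 𝔅, ∀ e, ωA e = ∑ f ∈ F, ω (e, f))
    {T : Finset (Xa × Y)} (hT : T ∈ frProd E 𝔅) :
    locEnt E ωA ≤ locEnt T ω := by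
  obtain ⟨F, hF, rfl⟩ := hT
  rw [locEnt_biUnion_image]
  refine sum_le_sum fun e he => ?_
  rw [hωA (F e) (hF e he) e]
  refine neg_sum_mul_logb_sum_le _ _ (fun f hf => ?_) one_lt_two
  exact hω _ ⟨F, hF, rfl⟩ (e, f) (mem_biUnion.2 ⟨e, he, mem_image_of_mem _ hf⟩)

end FoulisRandall

/-- if `A` is classical then `H(B|A) ≥ 0`, i.e. the joint
measurement entropy dominates the Shannon entropy of the classical marginal. -/
theorem condEnt_nonneg_of_classical {Xa Y : Type*} [DecidableEq Xa] [DecidableEq Y]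
    (E : Finset Xa) (𝔅 : Set (Finset Y)) (h𝔅 : 𝔅.Nonempty)
    (ω : Xa × Y → ℝ) (hω : IsState (frProd E 𝔅) ω)
    (ωA : Xa → ℝ) (hωA : ∀ F ∈ 𝔅, ∀ e, ωA e = ∑ f ∈ F, ω (e, f)) :
    locEnt E ωA ≤ measEnt (frProd E 𝔅) ω :=
  le_measEnt (frProd_nonempty E h𝔅) fun _ hT =>
    locEnt_marginal_le_locEnt E 𝔅 ω hω.1 ωA hωA hT
end
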